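/- For the SEMO without reevaluation on OneMinMax under one-bit noise with rate p ∈ [0,1], almost surely, for every t ≥ 0 and every k ∈ {0,...,n}, the population contains at most 3 members x with true OneMax value f(x) = k, i.e., |{x ∈ P_t : f(x) = k}| ≤ 3. -/

import Mathlib

open scoped ENNReal NNReal
open scoped Classical
open MeasureTheory

noncomputable section

/-- The search space `{0,1}^n`. -/
abbrev Pt (n : ℕ) := Fin n → Bool

/-- The OneMax value: number of one-bits. -/
def fval {n : ℕ} (x : Pt n) : ℕ := (Finset.univ.filter fun i => x i = true).card

/-- The OneMinMax objective `g(x) = (f(x), n - f(x))`. -/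
def gval {n : ℕ} (x : Pt n) : ℕ × ℕ := (fval x, n - fval x)

/-- Weak Pareto dominance on `ℕ × ℕ`. -/
def domLe (a b : ℕ × ℕ) : Prop := a.1 ≤ b.1 ∧ a.2 ≤ b.2

/-- Strict Pareto dominance on `ℕ × ℕ`. -/
def domLt (a b : ℕ × ℕ) : Prop := domLe a b ∧ a ≠ b

/-- Flip bit `i` of `x`. -/
def flipBit {n : ℕ} (x : Pt n) (i : Fin n) : Pt n := Function.update x i (!x i)

/-- One-bit mutation: flip one uniformly chosen bit. -/
def mutate {n : ℕ} (x : Pt n) : PMF (Pt n) :=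
  if h : (Finset.univ : Finset (Fin n)).Nonempty then
    (PMF.uniformOfFinset Finset.univ h).map (flipBit x)
  else PMF.pure x

/-- One-bit noise with rate `p`: with probability `p` a uniformly random bit is flipped. -/
def noisyPoint {n : ℕ} (p : ℝ≥0) (hp : p ≤ 1) (x : Pt n) : PMF (Pt n) :=
  (PMF.bernoulli p hp).bind fun b =>
    if b then mutate x else PMF.pure x

/-- The noisy objective value `g̃(x) = g(x̃)`. -/
def noisyG {n : ℕ} (p : ℝ≥0) (hp : p ≤ 1) (x : Pt n) : PMF (ℕ × ℕ) :=
  (noisyPoint p hp x).map gval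

/-- Probability of an event under a `PMF`. -/
def prEvent {α : Type*} (μ : PMF α) (E : Set α) : ℝ≥0∞ := μ.toOuterMeasure E

/-- Distribution of the state of a Markov chain at time `t`. -/
def iterDist {S : Type*} (init : PMF S) (step : S → PMF S) : ℕ → PMF S
  | 0 => init
  | t + 1 => (iterDist init step t).bind step

/-- `notHitBy step good t s` is the probability that starting from `s`, none of the
states at times `0, 1, …, t` satisfies `good`; i.e. `Pr[T > t]` for the hitting time `T`. -/
def notHitBy {S : Type*} (step : S → PMF S) (good : S → Prop) : ℕ → S → ℝ≥0∞
  | 0 => fun s => if good s then 0 else 1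
  | t + 1 => fun s => if good s then 0 else ∑' s', step s s' * notHitBy step good t s'

/-- Expected hitting time of `good`, via `E[T] = ∑_{t ≥ 0} Pr[T > t]`. -/
def expHit {S : Type*} (init : PMF S) (step : S → PMF S) (good : S → Prop) : ℝ≥0∞ :=
  ∑' t : ℕ, ∑' s, init s * notHitBy step good t s

/-- Law of the trajectory `(s_0, …, s_t)` of the Markov chain. -/
def trajPMF {S : Type*} (init : PMF S) (step : S → PMF S) : (t : ℕ) → PMF (Fin (t + 1) → S)
  | 0 => init.map fun s _ => s
  | t + 1 => (trajPMF init step t).bind fun tr =>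
      (step (tr (Fin.last t))).map fun s' => Fin.snoc tr s'

/-- Hitting time of `good` along a trajectory, valued in `ℕ∞`. -/
def hitTime {S : Type*} (good : S → Prop) (traj : ℕ → S) : ℕ∞ :=
  sInf ((fun t : ℕ => (t : ℕ∞)) '' {t | good (traj t)})

/-! ### SEMO without reevaluation -/

/-- State: population members together with their stored noisy objective values. -/
abbrev StateNR (n : ℕ) := Multiset (Pt n × (ℕ × ℕ))

/-- One iteration of the SEMO without reevaluation. -/
def stepNR {n : ℕ} (p : ℝ≥0) (hp : p ≤ 1) (P : StateNR n) : PMF (StateNR n) :=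
  if hP : P = 0 then PMF.pure P else
    (PMF.ofMultiset P hP).bind fun xv =>
      (mutate xv.1).bind fun x' =>
        (noisyG p hp x').map fun w =>
          if ∃ y ∈ P, domLt w y.2 then P
          else (x', w) ::ₘ P.filter fun y => ¬ domLe y.2 w

/-- Initialization: a single uniformly random point with an independent noisy evaluation. -/
def initNR (n : ℕ) (p : ℝ≥0) (hp : p ≤ 1) : PMF (StateNR n) :=
  (PMF.uniformOfFintype (Pt n)).bind fun x =>
    (noisyG p hp x).map fun w => ({(x, w)} : StateNR n)

/-- The set of stored noisy first-coordinate values `V(P)`. -/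
def VvalsNR {n : ℕ} (P : StateNR n) : Set ℕ := {v | ∃ y ∈ P, (y : Pt n × ℕ × ℕ).2.1 = v}

/-- Both extreme values `0` and `n` appear among the stored noisy first coordinates. -/
def goodExNR {n : ℕ} (P : StateNR n) : Prop := 0 ∈ VvalsNR P ∧ (n : ℕ) ∈ VvalsNR P

/-- The true OneMax values of the population cover the whole Pareto front `[0..n]`. -/
def fCoveredNR {n : ℕ} (P : StateNR n) : Prop :=
  {k : ℕ | ∃ y ∈ P, fval (y : Pt n × ℕ × ℕ).1 = k} = Set.Icc 0 n

/-! ### SEMO with reevaluation -/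

/-- State: a finite multiset of points. -/
abbrev StateR (n : ℕ) := Multiset (Pt n)

/-- The elimination procedure: process the elements of the list in order, drawing a fresh
noisy value for each, discarding an element if strictly dominated by a kept one, and
otherwise keeping it while removing the kept elements it dominates. -/
def elimAux {n : ℕ} (p : ℝ≥0) (hp : p ≤ 1) :
    List (Pt n) → Multiset (Pt n × (ℕ × ℕ)) → PMF (Multiset (Pt n × (ℕ × ℕ)))
  | [], kept => PMF.pure kept
  | x :: rest, kept =>
      (noisyG p hp x).bind fun w =>
        if ∃ y ∈ kept, domLt w (y : Pt n × ℕ × ℕ).2 then elimAux p hp rest kept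
        else elimAux p hp rest ((x, w) ::ₘ kept.filter fun y => ¬ domLe y.2 w)

/-- One iteration of the SEMO with reevaluation: uniform parent selection, one-bit
mutation, then elimination of `P ∪ {x'}` processed in a uniformly random order. -/
def stepR {n : ℕ} (p : ℝ≥0) (hp : p ≤ 1) (P : StateR n) : PMF (StateR n) :=
  if hP : P = 0 then PMF.pure P else
    (PMF.ofMultiset P hP).bind fun x =>
      (mutate x).bind fun x' =>
        (PMF.ofMultiset (↑((x' ::ₘ P).toList.permutations) : Multiset (List (Pt n)))
          (by
            simp only [ne_eq, Multiset.coe_eq_zero]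
            exact List.ne_nil_of_mem
              (List.mem_permutations.mpr (List.Perm.refl _)))).bind fun l =>
          (elimAux p hp l 0).map fun kept => kept.map Prod.fst

/-- Initialization: a single uniformly random point. -/
def initR (n : ℕ) : PMF (StateR n) :=
  (PMF.uniformOfFintype (Pt n)).map fun x => ({x} : Multiset (Pt n))

/-- The population contains members of true OneMax value `0` and of value `n`. -/
def goodExR {n : ℕ} (P : StateR n) : Prop :=
  (∃ x ∈ P, fval (x : Pt n) = 0) ∧ (∃ x ∈ P, fval (x : Pt n) = n)

/-- The true OneMax values of the population cover the whole Pareto front `[0..n]`. -/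
def fCoveredR {n : ℕ} (P : StateR n) : Prop :=
  {k : ℕ | ∃ x ∈ P, fval (x : Pt n) = k} = Set.Icc 0 n

/-- Number of distinct true OneMax values in the population. -/
def Lval {n : ℕ} (P : StateR n) : ℕ := (P.map fval).toFinset.card

/-- Append the all-zeros (resp. all-ones) string if no member has value 0 (resp. `n`). -/
def fixExtremes {n : ℕ} (P : StateR n) : StateR n :=
  let P1 := if ∃ x ∈ P, fval (x : Pt n) = 0 then P else ((fun _ => false) : Pt n) ::ₘ P
  if ∃ x ∈ P1, fval (x : Pt n) = n then P1 else ((fun _ => true) : Pt n) ::ₘ P1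

/-- One iteration of the `K`-extreme-values-keeping SEMO with reevaluation, with the
iteration counter as part of the state. -/
def stepK {n : ℕ} (p : ℝ≥0) (hp : p ≤ 1) (K : ℕ) (st : ℕ × StateR n) :
    PMF (ℕ × StateR n) :=
  (stepR p hp st.2).map fun Q => (st.1 + 1, if st.1 < K then fixExtremes Q else Q)

/-! Every stored value is the objective value of the stored point or of a one-bit neighbour,
so it lies on the front `(v, n - v)` with `v` within one of the true OneMax value. An
accepted offspring evicts every member it weakly dominates, in particular every member
carrying the same stored value, so stored values stay pairwise distinct. Hence members of
true OneMax value `k` carry distinct stored first coordinates in `{k - 1, k, k + 1}`. -/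

lemma mem_support_iterDist_of_invariant {S : Type*} {init : PMF S} {step : S → PMF S}
    {I : S → Prop} (h_init : ∀ s ∈ init.support, I s)
    (h_step : ∀ s, I s → ∀ s' ∈ (step s).support, I s') :
    ∀ t, ∀ s ∈ (iterDist init step t).support, I s
  | 0 => h_init
  | t + 1 => fun s hs => by
      obtain ⟨s₀, hs₀, hs⟩ := (PMF.mem_support_bind_iff _ _ _).mp hs
      exact h_step s₀ (mem_support_iterDist_of_invariant h_init h_step t s₀ hs₀) s hs

section

variable {n : ℕ}

lemma erase_filter_flipBit (x : Pt n) (i : Fin n) :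
    (Finset.univ.filter fun j => flipBit x i j = true).erase i =
      (Finset.univ.filter fun j => x j = true).erase i := by
  ext j
  by_cases hji : j = i
  · simp [hji]
  · simp [hji, flipBit, Function.update_apply]

lemma fval_flipBit_bounds (x : Pt n) (i : Fin n) :
    fval x ≤ fval (flipBit x i) + 1 ∧ fval (flipBit x i) ≤ fval x + 1 := by
  have h := congrArg Finset.card (erase_filter_flipBit x i)
  rw [Finset.card_erase_eq_ite, Finset.card_erase_eq_ite] at h
  simp only [fval]
  split_ifs at h <;> omega

lemma mem_support_noisyPoint {p : ℝ≥0} {hp : p ≤ 1} {x y : Pt n}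
    (h : y ∈ (noisyPoint p hp x).support) : y = x ∨ ∃ i, y = flipBit x i := by
  obtain ⟨b, -, hb⟩ := (PMF.mem_support_bind_iff _ _ _).mp h
  cases b
  · exact Or.inl ((PMF.mem_support_pure_iff _ _).mp hb)
  · rw [if_pos rfl, mutate] at hb
    split_ifs at hb
    · obtain ⟨i, -, hi⟩ := (PMF.mem_support_map_iff _ _ _).mp hb
      exact Or.inr ⟨i, hi.symm⟩
    · exact Or.inl ((PMF.mem_support_pure_iff _ _).mp hb)

def IsFaithfulValue (x : Pt n) (w : ℕ × ℕ) : Prop :=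
  w.2 = n - w.1 ∧ fval x ≤ w.1 + 1 ∧ w.1 ≤ fval x + 1

lemma isFaithfulValue_of_mem_support_noisyG {p : ℝ≥0} {hp : p ≤ 1} {x : Pt n} {w : ℕ × ℕ}
    (h : w ∈ (noisyG p hp x).support) : IsFaithfulValue x w := by
  obtain ⟨y, hy, rfl⟩ := (PMF.mem_support_map_iff _ _ _).mp h
  refine ⟨rfl, ?_⟩
  rcases mem_support_noisyPoint hy with rfl | ⟨i, rfl⟩
  · simp [gval]
  · simpa [gval] using fval_flipBit_bounds x i

lemma IsFaithfulValue.eq_of_fst_eq {x y : Pt n} {v w : ℕ × ℕ} (hv : IsFaithfulValue x v)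
    (hw : IsFaithfulValue y w) (h : v.1 = w.1) : v = w :=
  Prod.ext h (by rw [hv.1, hw.1, h])

lemma nodup_map_snd_cons_filter_not_domLe {α : Type*} {P : Multiset (α × (ℕ × ℕ))}
    (hP : (P.map Prod.snd).Nodup) (x : α) (w : ℕ × ℕ) :
    (((x, w) ::ₘ P.filter fun y => ¬ domLe y.2 w).map Prod.snd).Nodup := by
  rw [Multiset.map_cons, Multiset.nodup_cons]
  refine ⟨fun hw => ?_, Multiset.nodup_of_le (Multiset.map_le_map (Multiset.filter_le _ _)) hP⟩
  obtain ⟨y, hy, hyw⟩ := Multiset.mem_map.mp hw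
  exact (Multiset.mem_filter.mp hy).2 (hyw ▸ ⟨le_rfl, le_rfl⟩)

def IsFaithfulPopulation (P : StateNR n) : Prop :=
  (∀ y ∈ P, IsFaithfulValue y.1 y.2) ∧ (P.map Prod.snd).Nodup

lemma isFaithfulPopulation_of_mem_support_initNR {p : ℝ≥0} {hp : p ≤ 1} {P : StateNR n}
    (h : P ∈ (initNR n p hp).support) : IsFaithfulPopulation P := by
  simp only [initNR, PMF.mem_support_bind_iff, PMF.mem_support_map_iff] at h
  obtain ⟨x, -, w, hw, rfl⟩ := h
  refine ⟨fun y hy => ?_, by simp⟩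
  rw [Multiset.mem_singleton.mp hy]
  exact isFaithfulValue_of_mem_support_noisyG hw

lemma IsFaithfulPopulation.of_mem_support_stepNR {p : ℝ≥0} {hp : p ≤ 1} {Q P : StateNR n}
    (hQ : IsFaithfulPopulation Q) (h : P ∈ (stepNR p hp Q).support) :
    IsFaithfulPopulation P := by
  rw [stepNR] at h
  split_ifs at h
  · rwa [(PMF.mem_support_pure_iff _ _).mp h]
  simp only [PMF.mem_support_bind_iff, PMF.mem_support_map_iff] at h
  obtain ⟨-, -, x', -, w, hw, rfl⟩ := h
  split_ifs
  · exact hQ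
  refine ⟨fun y hy => ?_, nodup_map_snd_cons_filter_not_domLe hQ.2 x' w⟩
  rcases Multiset.mem_cons.mp hy with rfl | hy
  · exact isFaithfulValue_of_mem_support_noisyG hw
  · exact hQ.1 y (Multiset.mem_of_mem_filter hy)

lemma IsFaithfulPopulation.card_filter_fval_eq_le {P : StateNR n}
    (hP : IsFaithfulPopulation P) (k : ℕ) :
    Multiset.card (P.filter fun y => fval (y : Pt n × ℕ × ℕ).1 = k) ≤ 3 := by
  set F := P.filter fun y => fval (y : Pt n × ℕ × ℕ).1 = k
  have hFP : F ≤ P := Multiset.filter_le _ _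
  have h_nodup : (F.map fun y => y.2.1).Nodup := by
    rw [show (fun y : Pt n × ℕ × ℕ => y.2.1) = Prod.fst ∘ Prod.snd from rfl,
      ← Multiset.map_map]
    refine (Multiset.nodup_of_le (Multiset.map_le_map hFP) hP.2).map_on ?_
    simp only [Multiset.mem_map]
    rintro _ ⟨y, hy, rfl⟩ _ ⟨z, hz, rfl⟩
    exact (hP.1 y (Multiset.mem_of_le hFP hy)).eq_of_fst_eq (hP.1 z (Multiset.mem_of_le hFP hz))
  have h_sub : (F.map fun y => y.2.1).toFinset ⊆ Finset.Icc (k - 1) (k + 1) := by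
    intro v hv
    obtain ⟨y, hy, rfl⟩ := Multiset.mem_map.mp (Multiset.mem_toFinset.mp hv)
    obtain ⟨-, h₁, h₂⟩ := hP.1 y (Multiset.mem_of_le hFP hy)
    have hk : fval y.1 = k := (Multiset.mem_filter.mp hy).2
    rw [Finset.mem_Icc]
    omega
  calc Multiset.card F = (F.map fun y => y.2.1).toFinset.card := by
        rw [Multiset.toFinset_card_of_nodup h_nodup, Multiset.card_map]
    _ ≤ (Finset.Icc (k - 1) (k + 1)).card := Finset.card_le_card h_sub
    _ ≤ 3 := by rw [Nat.card_Icc]; omega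

end

theorem statement6_general (n : ℕ) (p : ℝ≥0) (hp : p ≤ 1) :
    ∀ t : ℕ, ∀ P : StateNR n,
      P ∈ (iterDist (initNR n p hp) (stepNR p hp) t).support →
      ∀ k : ℕ, k ≤ n →
        Multiset.card (P.filter fun y => fval (y : Pt n × ℕ × ℕ).1 = k) ≤ 3 := by
  intro t P hP k _
  have hfaithful : IsFaithfulPopulation P :=
    mem_support_iterDist_of_invariant (fun _ => isFaithfulPopulation_of_mem_support_initNR)
      (fun _ hQ _ => hQ.of_mem_support_stepNR) t P hP
  exact hfaithful.card_filter_fval_eq_le k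

/-- for the SEMO without reevaluation, almost surely at every time `t` and
for every `k ∈ [0..n]`, the population contains at most `3` members of true OneMax
value `k`. -/
theorem statement6 (n : ℕ) (hn : 1 ≤ n) (p : ℝ≥0) (hp : p ≤ 1) :
    ∀ t : ℕ, ∀ P : StateNR n,
      P ∈ (iterDist (initNR n p hp) (stepNR p hp) t).support →
      ∀ k : ℕ, k ≤ n →
        Multiset.card (P.filter fun y => fval (y : Pt n × ℕ × ℕ).1 = k) ≤ 3 :=
  statement6_general n p hp

end
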